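/- arXiv:1509.00537 — 5 statements merged into one kernel-verified Lean document; each statement's English description precedes it below -/
import Mathlib

section
/- If X and Y are n×n real symmetric matrices and A is an invertible n×n real matrix, then the linear map X ↦ A X Aᵀ on the space of symmetric matrices has Jacobian determinant of absolute value |det(A)|^{n+1}. -/
/-!
The determinant of the congruence map is multiplicative in `A`, as is `det A ^ (n + 1)`, so it
suffices to compare them on diagonal matrices and transvections, which generate all matrices
multiplicatively. A transvection is a commutator, so both sides are `1` there. In the coordinates
`X i j` (`i ≤ j`), `diagonal D` acts by the scalars `D i * D j`, and each `D i` occurs `n + 1`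
times in their product.
-/

open Matrix

/-- The real vector space of `n × n` real symmetric matrices. -/
def symmSub (n : ℕ) : Submodule ℝ (Matrix (Fin n) (Fin n) ℝ) where
  carrier := {X | X.IsSymm}
  add_mem' := by
    intro a b ha hb
    simp only [Set.mem_setOf_eq, Matrix.IsSymm, Matrix.transpose_add] at *
    rw [ha, hb]
  zero_mem' := by simp [Matrix.IsSymm]
  smul_mem' := by
    intro c a ha
    simp only [Set.mem_setOf_eq, Matrix.IsSymm, Matrix.transpose_smul] at *
    rw [ha]

/-- The congruence map `X ↦ A X Aᵀ` on the space of symmetric matrices. -/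
noncomputable def congrSymm (n : ℕ) (A : Matrix (Fin n) (Fin n) ℝ) :
    symmSub n →ₗ[ℝ] symmSub n where
  toFun X := ⟨A * X.1 * Aᵀ, by
    have hX : (X.1)ᵀ = X.1 := X.2
    show (A * X.1 * Aᵀ)ᵀ = A * X.1 * Aᵀ
    simp [Matrix.transpose_mul, Matrix.mul_assoc, hX]⟩
  map_add' X Y := Subtype.ext (by simp [Matrix.mul_add, Matrix.add_mul])
  map_smul' c X := Subtype.ext (by simp [Matrix.mul_smul, Matrix.smul_mul])

theorem Fin.prod_le_mul_eq_prod_pow {M : Type*} [CommMonoid M] {n : ℕ} (f : Fin n → M) :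
    ∏ p : {p : Fin n × Fin n // p.1 ≤ p.2}, f p.1.1 * f p.1.2 = (∏ i, f i) ^ (n + 1) := by
  classical
  rw [← Finset.prod_subtype {p : Fin n × Fin n | p.1 ≤ p.2} (by simp) (fun p => f p.1 * f p.2),
    Finset.prod_mul_distrib,
    Finset.prod_finset_product _ Finset.univ Finset.Ici (by simp),
    Finset.prod_finset_product_right _ Finset.univ Finset.Iic (by simp), ← Finset.prod_pow,
    ← Finset.prod_mul_distrib]
  refine Finset.prod_congr rfl fun i _ => ?_
  dsimp only
  rw [Finset.prod_const, Finset.prod_const, Fin.card_Ici, Fin.card_Iic, ← pow_add]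
  congr 1
  omega

section Transvection

variable {R ι : Type*} [CommRing R] [Fintype ι] [DecidableEq ι] [Invertible (2 : R)]

theorem Matrix.diagonal_mul_transvection_mul_diagonal {i j : ι} (hij : i ≠ j) (c : R) :
    diagonal (Function.update 1 i 2) * transvection i j c * diagonal (Function.update 1 i ⅟2) =
      transvection i j (2 * c) := by
  ext a b
  simp only [transvection, mul_diagonal, diagonal_mul, add_apply, one_apply, single_apply,
    Function.update_apply, Pi.one_apply]
  by_cases ha : a = i <;> by_cases hb : b = i <;> by_cases hjb : j = b <;>
    simp_all [eq_comm]

/-- `transvection i j c` is the commutator of itself with `D`, the diagonal matrix doubling the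
`i`-th coordinate. -/
theorem MonoidHom.map_transvection {M : Type*} [CommMonoid M] (φ : Matrix ι ι R →* M) {i j : ι}
    (hij : i ≠ j) (c : R) : φ (transvection i j c) = 1 := by
  set D : Matrix ι ι R := diagonal (Function.update 1 i 2)
  set D' : Matrix ι ι R := diagonal (Function.update 1 i ⅟2)
  have hDD' : D * D' = 1 := by
    rw [diagonal_mul_diagonal, ← diagonal_one]
    congr 1
    funext k
    by_cases hk : k = i <;> simp [hk]
  have hcomm : transvection i j c = D * transvection i j c * D' * transvection i j (-c) := by
    rw [Matrix.diagonal_mul_transvection_mul_diagonal hij, transvection_mul_transvection_same _ _ hij]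
    congr 1
    ring
  calc φ (transvection i j c) = φ (D * transvection i j c * D' * transvection i j (-c)) :=
        congrArg φ hcomm
    _ = φ (D * D') * φ (transvection i j c * transvection i j (-c)) := by
        simp only [map_mul]
        ac_rfl
    _ = 1 := by
        rw [hDD', transvection_mul_transvection_same _ _ hij, add_neg_cancel, transvection_zero,
          map_one, one_mul]

end Transvection

theorem mem_symmSub {n : ℕ} {X : Matrix (Fin n) (Fin n) ℝ} : X ∈ symmSub n ↔ X.IsSymm := Iff.rfl

@[simp]
theorem congrSymm_apply_coe (n : ℕ) (A : Matrix (Fin n) (Fin n) ℝ) (X : symmSub n) :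
    (congrSymm n A X : Matrix (Fin n) (Fin n) ℝ) = A * X * Aᵀ := rfl

noncomputable def congrSymmHom (n : ℕ) : Matrix (Fin n) (Fin n) ℝ →* Module.End ℝ (symmSub n) where
  toFun := congrSymm n
  map_one' := by ext X : 2; simp
  map_mul' A B := by ext X : 2; simp [Matrix.mul_assoc, transpose_mul]

noncomputable def symmSubEquivUpper (n : ℕ) :
    symmSub n ≃ₗ[ℝ] ({p : Fin n × Fin n // p.1 ≤ p.2} → ℝ) where
  toFun X p := X.1 p.1.1 p.1.2
  map_add' _ _ := rfl
  map_smul' _ _ := rfl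
  invFun v := ⟨of fun i j => v ⟨(min i j, max i j), min_le_max⟩,
    mem_symmSub.2 <| IsSymm.ext fun i j => by simp only [of_apply, min_comm, max_comm]⟩
  left_inv X := by
    ext i j
    rcases le_total i j with h | h
    · simp [h]
    · simp [h, (mem_symmSub.1 X.2).apply i j]
  right_inv v := by
    funext ⟨⟨i, j⟩, h⟩
    simp [h]

@[simp]
theorem symmSubEquivUpper_apply (n : ℕ) (X : symmSub n) (p : {p : Fin n × Fin n // p.1 ≤ p.2}) :
    symmSubEquivUpper n X p = X.1 p.1.1 p.1.2 := rfl

theorem det_congrSymm_diagonal (n : ℕ) (D : Fin n → ℝ) :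
    LinearMap.det (congrSymm n (diagonal D)) = (∏ i, D i) ^ (n + 1) := by
  set e := symmSubEquivUpper n
  have h : congrSymm n (diagonal D) =
      e.symm.conj (toLin' (diagonal fun p => D p.1.1 * D p.1.2)) := by
    ext X : 1
    rw [LinearEquiv.conj_apply_apply, LinearEquiv.symm_symm, LinearEquiv.eq_symm_apply]
    funext p
    simp only [e, symmSubEquivUpper_apply, congrSymm_apply_coe, diagonal_transpose, mul_diagonal,
      diagonal_mul, toLin'_apply, mulVec_diagonal]
    ring
  rw [h, LinearEquiv.conj_apply, LinearMap.comp_assoc, LinearMap.det_conj, LinearMap.det_toLin',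
    det_diagonal, Fin.prod_le_mul_eq_prod_pow]

theorem det_congrSymm (n : ℕ) (A : Matrix (Fin n) (Fin n) ℝ) :
    LinearMap.det (congrSymm n A) = A.det ^ (n + 1) := by
  induction A using diagonal_transvection_induction with
  | hdiag D _ => rw [det_congrSymm_diagonal, det_diagonal]
  | htransvec t =>
    rw [TransvectionStruct.toMatrix, det_transvection_of_ne _ _ t.hij, one_pow]
    exact (LinearMap.det.comp (congrSymmHom n)).map_transvection t.hij t.c
  | hmul B C hB hC =>
    rw [show congrSymm n (B * C) = congrSymm n B * congrSymm n C from map_mul (congrSymmHom n) B C,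
      map_mul, hB, hC, det_mul, mul_pow]

theorem stmt_2_general (n : ℕ) (A : Matrix (Fin n) (Fin n) ℝ) :
    |LinearMap.det (congrSymm n A)| = |A.det| ^ (n + 1) := by
  rw [det_congrSymm, abs_pow]

/-- For invertible `A ∈ GL(n, ℝ)`, the linear map `X ↦ A X Aᵀ` on the space of `n × n` real
symmetric matrices has Jacobian determinant of absolute value `|det A|^{n+1}`. -/
theorem stmt_2 (n : ℕ) (A : Matrix (Fin n) (Fin n) ℝ) (hA : IsUnit A.det) :
    |LinearMap.det (congrSymm n A)| = |A.det| ^ (n + 1) :=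
  stmt_2_general n A
end

section
/- If X is an n×n real skew-symmetric matrix and A is an invertible n×n real matrix, then the linear map X ↦ A X Aᵀ on the space of skew-symmetric matrices has Jacobian determinant of absolute value |det(A)|^{n-1}. -/
open Matrix

/-- The real vector space of `n × n` real skew-symmetric matrices. -/
def skewSub (n : ℕ) : Submodule ℝ (Matrix (Fin n) (Fin n) ℝ) where
  carrier := {X | Xᵀ = -X}
  add_mem' := by
    intro a b ha hb
    simp only [Set.mem_setOf_eq, Matrix.transpose_add] at *
    rw [ha, hb, neg_add]
  zero_mem' := by simp
  smul_mem' := by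
    intro c a ha
    simp only [Set.mem_setOf_eq, Matrix.transpose_smul] at *
    rw [ha, smul_neg]

/-- The congruence map `X ↦ A X Aᵀ` on the space of skew-symmetric matrices. -/
noncomputable def congrSkew (n : ℕ) (A : Matrix (Fin n) (Fin n) ℝ) :
    skewSub n →ₗ[ℝ] skewSub n where
  toFun X := ⟨A * X.1 * Aᵀ, by
    have hX : (X.1)ᵀ = -X.1 := X.2
    show (A * X.1 * Aᵀ)ᵀ = -(A * X.1 * Aᵀ)
    simp [Matrix.transpose_mul, Matrix.mul_assoc, hX, Matrix.mul_neg, Matrix.neg_mul]⟩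
  map_add' X Y := Subtype.ext (by simp [Matrix.mul_add, Matrix.add_mul])
  map_smul' c X := Subtype.ext (by simp [Matrix.mul_smul, Matrix.smul_mul])

/-! `X ↦ A X Aᵀ` is multiplicative in `A`, so by row reduction it suffices to treat transvections
and diagonal matrices. A transvection is conjugate to its inverse, so its image has determinant
`±1`. The diagonal matrix `diag v` scales the coordinate `X i j` (`i < j`) by
`v i * v j`, and each index occurs in exactly `n - 1` such pairs. -/

theorem Matrix.TransvectionStruct.map_toMatrix_mul_self {n R M : Type*} [Fintype n]
    [DecidableEq n] [CommRing R] [CommMonoid M] (f : Matrix n n R →* M)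
    (t : TransvectionStruct n R) : f t.toMatrix * f t.toMatrix = 1 := by
  obtain ⟨i, j, hij, c⟩ := t
  -- flipping the sign of the `j`-th basis vector conjugates `transvection i j c` to its inverse
  let S : Matrix n n R := diagonal (Function.update 1 j (-1))
  have hSS : S * S = 1 := by
    rw [diagonal_mul_diagonal, ← diagonal_one]
    congr 1
    ext k
    rcases eq_or_ne k j with rfl | hk <;> simp [*]
  have hconj : S * transvection i j c * S = transvection i j (-c) := by
    rw [transvection, transvection, mul_add, add_mul, mul_one, hSS]
    congr 1
    ext a b
    by_cases h : i = a ∧ j = b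
    · obtain ⟨rfl, rfl⟩ := h
      simp [S, hij]
    · simp [S, h]
  have hinv : f (transvection i j c) * f (transvection i j (-c)) = 1 := by
    rw [← map_mul, transvection_mul_transvection_same i j hij, add_neg_cancel,
      transvection_zero, map_one]
  calc f (transvection i j c) * f (transvection i j c)
      = f (transvection i j c) * (f (S * S) * f (transvection i j c)) := by
        rw [hSS, map_one, one_mul]
    _ = f (transvection i j c) * f (S * transvection i j c * S) := by
        rw [map_mul, map_mul, map_mul, mul_right_comm (f S)]
    _ = 1 := by rw [hconj, hinv]

theorem prod_lt_pairs_mul_eq_prod_pow {ι M : Type*} [Fintype ι] [LinearOrder ι] [CommMonoid M]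
    (v : ι → M) :
    ∏ p : {p : ι × ι // p.1 < p.2}, v p.1.1 * v p.1.2 = (∏ i, v i) ^ (Fintype.card ι - 1) := by
  have hrow (i : ι) : ∏ j, (if i < j then v i else 1) * (if j < i then v i else 1)
      = v i ^ (Fintype.card ι - 1) := by
    rw [← Finset.mul_prod_erase _ _ (Finset.mem_univ i)]
    simp only [lt_irrefl, if_false, one_mul]
    rw [Fintype.card, ← Finset.card_erase_of_mem (Finset.mem_univ i), ← Finset.prod_const]
    refine Finset.prod_congr rfl fun j hj => ?_
    rcases (Finset.ne_of_mem_erase hj).lt_or_gt with h | h <;> simp [h, h.not_gt]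
  calc ∏ p : {p : ι × ι // p.1 < p.2}, v p.1.1 * v p.1.2
      = ∏ i, ∏ j, if i < j then v i * v j else 1 := by
        rw [← Finset.prod_toFinset_eq_subtype _ fun p : ι × ι => v p.1 * v p.2,
          Set.toFinset_ofPred, Finset.prod_filter, Fintype.prod_prod_type]
    _ = (∏ i, ∏ j, if i < j then v i else 1) * ∏ i, ∏ j, if i < j then v j else 1 := by
        simp only [← Finset.prod_mul_distrib]
        exact Finset.prod_congr rfl fun i _ => Finset.prod_congr rfl fun j _ => by
          split_ifs <;> simp
    _ = (∏ i, ∏ j, if i < j then v i else 1) * ∏ i, ∏ j, if j < i then v i else 1 := by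
        rw [Finset.prod_comm (f := fun i j => if i < j then v j else 1)]
    _ = (∏ i, v i) ^ (Fintype.card ι - 1) := by
        simp only [← Finset.prod_mul_distrib, hrow, Finset.prod_pow]

theorem mem_skewSub {n : ℕ} {X : Matrix (Fin n) (Fin n) ℝ} : X ∈ skewSub n ↔ Xᵀ = -X := Iff.rfl

theorem coe_congrSkew_apply (n : ℕ) (A : Matrix (Fin n) (Fin n) ℝ) (X : skewSub n) :
    (congrSkew n A X : Matrix (Fin n) (Fin n) ℝ) = A * X * Aᵀ := rfl

theorem congrSkew_one (n : ℕ) : congrSkew n 1 = LinearMap.id := by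
  ext X : 2
  simp [coe_congrSkew_apply]

theorem congrSkew_mul (n : ℕ) (A B : Matrix (Fin n) (Fin n) ℝ) :
    congrSkew n (A * B) = congrSkew n A ∘ₗ congrSkew n B := by
  ext X : 2
  simp [coe_congrSkew_apply, transpose_mul, Matrix.mul_assoc]

noncomputable def congrSkewHom (n : ℕ) :
    Matrix (Fin n) (Fin n) ℝ →* Module.End ℝ (skewSub n) where
  toFun := congrSkew n
  map_one' := congrSkew_one n
  map_mul' := congrSkew_mul n

noncomputable def skewSubEquivUpper (n : ℕ) :
    skewSub n ≃ₗ[ℝ] ({p : Fin n × Fin n // p.1 < p.2} → ℝ) where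
  toFun X p := X.1 p.1.1 p.1.2
  map_add' _ _ := rfl
  map_smul' _ _ := rfl
  invFun c :=
    let U : Matrix (Fin n) (Fin n) ℝ := of fun i j => if h : i < j then c ⟨(i, j), h⟩ else 0
    ⟨U - Uᵀ, by rw [mem_skewSub, transpose_sub, transpose_transpose, neg_sub]⟩
  left_inv X := by
    have hX (i j : Fin n) : X.1 j i = -X.1 i j := congr_fun₂ (mem_skewSub.1 X.2) i j
    ext i j
    rcases lt_trichotomy i j with h | rfl | h
    · simp [h, h.not_gt]
    · simp [self_eq_neg.1 (hX i i)]
    · simp [h, h.not_gt, hX j i]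
  right_inv c := by
    ext p
    simp [p.2, p.2.not_gt]

theorem det_congrSkew_diagonal (n : ℕ) (v : Fin n → ℝ) :
    LinearMap.det (congrSkew n (diagonal v)) =
      ∏ p : {p : Fin n × Fin n // p.1 < p.2}, v p.1.1 * v p.1.2 := by
  rw [← LinearMap.det_conj _ (skewSubEquivUpper n)]
  have hdiag : (skewSubEquivUpper n : _ →ₗ[ℝ] _) ∘ₗ congrSkew n (diagonal v) ∘ₗ
      ((skewSubEquivUpper n).symm : _ →ₗ[ℝ] _) =
        toLin' (diagonal fun p : {p : Fin n × Fin n // p.1 < p.2} => v p.1.1 * v p.1.2) := by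
    refine LinearMap.ext fun c => funext fun p => ?_
    change (diagonal v * ((skewSubEquivUpper n).symm c : Matrix (Fin n) (Fin n) ℝ) *
      (diagonal v)ᵀ : Matrix (Fin n) (Fin n) ℝ) p.1.1 p.1.2 = _
    simp [skewSubEquivUpper, mulVec_diagonal, p.2, p.2.not_gt]
    ring
  rw [hdiag, LinearMap.det_toLin', det_diagonal]

theorem abs_det_congrSkew_transvection (n : ℕ) (t : TransvectionStruct (Fin n) ℝ) :
    |LinearMap.det (congrSkew n t.toMatrix)| = 1 := by
  have h : LinearMap.det (congrSkew n t.toMatrix) * LinearMap.det (congrSkew n t.toMatrix) = 1 :=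
    t.map_toMatrix_mul_self (LinearMap.det.comp (congrSkewHom n))
  rcases mul_self_eq_one_iff.1 h with h | h <;> simp [h]

theorem stmt_3_general (n : ℕ) (A : Matrix (Fin n) (Fin n) ℝ) :
    |LinearMap.det (congrSkew n A)| = |A.det| ^ (n - 1) := by
  induction A using diagonal_transvection_induction with
  | hdiag D _ =>
    rw [det_congrSkew_diagonal, prod_lt_pairs_mul_eq_prod_pow, Fintype.card_fin, det_diagonal,
      abs_pow]
  | htransvec t => rw [abs_det_congrSkew_transvection, t.det, abs_one, one_pow]
  | hmul A B hA hB =>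
    rw [congrSkew_mul, LinearMap.det_comp, abs_mul, hA, hB, det_mul, abs_mul, mul_pow]

/-- For invertible `A ∈ GL(n, ℝ)`, the linear map `X ↦ A X Aᵀ` on the space of `n × n` real
skew-symmetric matrices has Jacobian determinant of absolute value `|det A|^{n-1}`. -/
theorem stmt_3 (n : ℕ) (A : Matrix (Fin n) (Fin n) ℝ) (hA : IsUnit A.det) :
    |LinearMap.det (congrSkew n A)| = |A.det| ^ (n - 1) :=
  stmt_3_general n A
end

section
/- The normalized joint eigenvalue density integral over the torus: (1/((2π)^n n!)) ∫_{[0,2π]^n} ∏_{1≤i<j≤n} |e^{iθ_i} - e^{iθ_j}|² dθ₁⋯dθ_n = 1; equivalently ∫_{[0,2π]^n} ∏_{i<j} |e^{iθ_i} - e^{iθ_j}|² dθ = (2π)^n n!. -/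
/-!
With `ζ_j = exp (i θ_j)`, the integrand is `|det V(ζ)|²` for the Vandermonde matrix `V(ζ)`, and
`det V(ζ) = ∑_σ sign σ ∏_j ζ_j ^ (σ⁻¹ j)` is a trigonometric polynomial in `θ` whose `n!`
frequencies are pairwise distinct and whose coefficients have modulus one. By orthogonality of
the characters of the torus (Parseval), its squared modulus integrates to `(2π)^n · n!`.
-/

open MeasureTheory Complex ComplexConjugate Finset

lemma integral_Icc_exp_int_mul_I (k : ℤ) :
    ∫ t in Set.Icc (0 : ℝ) (2 * Real.pi), exp (I * k * t) =
      if k = 0 then ((2 * Real.pi : ℝ) : ℂ) else 0 := by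
  split_ifs with hk
  · simp [hk, Real.two_pi_pos.le]
  · rw [integral_Icc_eq_integral_Ioc, ← intervalIntegral.integral_of_le Real.two_pi_pos.le,
      integral_exp_mul_complex (by simp [hk, I_ne_zero])]
    have : I * k * ((2 * Real.pi : ℝ) : ℂ) = k * (2 * Real.pi * I) := by push_cast; ring
    rw [this, exp_int_mul_two_pi_mul_I]
    simp

section Torus

variable {ι : Type*} [Fintype ι]

noncomputable def torusChar (m : ι → ℤ) (θ : ι → ℝ) : ℂ :=
  ∏ j, exp (I * m j * θ j)

@[fun_prop]
lemma continuous_torusChar (m : ι → ℤ) : Continuous (torusChar m) := by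
  unfold torusChar; fun_prop

lemma torusChar_mul_conj (m m' : ι → ℤ) (θ : ι → ℝ) :
    torusChar m θ * conj (torusChar m' θ) = torusChar (m - m') θ := by
  simp only [torusChar, map_prod, ← prod_mul_distrib, ← exp_conj, ← exp_add]
  refine prod_congr rfl fun j _ => ?_
  simp only [map_mul, conj_I, map_intCast, conj_ofReal, Pi.sub_apply, Int.cast_sub]
  ring_nf

lemma setIntegral_torusChar (m : ι → ℤ) :
    ∫ θ in Set.univ.pi fun _ : ι => Set.Icc (0 : ℝ) (2 * Real.pi), torusChar m θ =
      if m = 0 then ((2 * Real.pi : ℝ) : ℂ) ^ Fintype.card ι else 0 := by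
  unfold torusChar
  rw [volume_pi, Measure.restrict_pi_pi,
    integral_fintype_prod_eq_prod (f := fun j (t : ℝ) => exp (I * m j * t))]
  simp only [integral_Icc_exp_int_mul_I, prod_ite_zero, mem_univ, true_implies, prod_const,
    card_univ, funext_iff, Pi.zero_apply]

lemma setIntegral_norm_sum_torusChar_sq {S : Type*} [Fintype S] (a : S → ℂ) {m : S → ι → ℤ}
    (hm : Function.Injective m) :
    ∫ θ in Set.univ.pi fun _ : ι => Set.Icc (0 : ℝ) (2 * Real.pi),
        ‖∑ s, a s * torusChar (m s) θ‖ ^ 2 =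
      (2 * Real.pi) ^ Fintype.card ι * ∑ s, ‖a s‖ ^ 2 := by
  classical
  have hbox : IsCompact (Set.univ.pi fun _ : ι => Set.Icc (0 : ℝ) (2 * Real.pi)) :=
    isCompact_univ_pi fun _ => isCompact_Icc
  have hexpand : ∀ θ, ((‖∑ s, a s * torusChar (m s) θ‖ ^ 2 : ℝ) : ℂ) =
      ∑ s, ∑ t, a s * conj (a t) * torusChar (m s - m t) θ := by
    intro θ
    rw [ofReal_pow, ← mul_conj', map_sum, sum_mul_sum]
    refine sum_congr rfl fun s _ => sum_congr rfl fun t _ => ?_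
    rw [← torusChar_mul_conj, map_mul]; ring
  have hint : ∀ s t, IntegrableOn (fun θ => a s * conj (a t) * torusChar (m s - m t) θ)
      (Set.univ.pi fun _ : ι => Set.Icc (0 : ℝ) (2 * Real.pi)) :=
    fun s t => (by fun_prop : Continuous _).continuousOn.integrableOn_compact hbox
  apply ofReal_injective
  rw [← integral_complex_ofReal]
  simp only [hexpand]
  rw [integral_finsetSum _ fun s _ => integrable_finsetSum _ fun t _ => hint s t]
  simp only [integral_finsetSum _ fun t _ => hint _ t, integral_const_mul, setIntegral_torusChar,
    sub_eq_zero, hm.eq_iff, mul_ite, mul_zero, sum_ite_eq, mem_univ, if_true, mul_conj']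
  push_cast
  rw [mul_sum]
  exact sum_congr rfl fun _ _ => by ring

end Torus

lemma norm_det_vandermonde_sq {R : Type*} [SeminormedCommRing R] [NormMulClass R]
    [NormOneClass R] {n : ℕ} (v : Fin n → R) :
    ‖(Matrix.vandermonde v).det‖ ^ 2 =
      ∏ p ∈ univ.filter fun p : Fin n × Fin n => p.1 < p.2, ‖v p.1 - v p.2‖ ^ 2 := by
  rw [Matrix.det_vandermonde, prod_filter, ← univ_product_univ, prod_product, norm_prod,
    ← prod_pow]
  refine prod_congr rfl fun i _ => ?_
  rw [norm_prod, ← prod_pow, ← prod_filter, filter_lt_eq_Ioi]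
  exact prod_congr rfl fun j _ => by rw [norm_sub_rev]

lemma det_vandermonde_exp_mul_I {n : ℕ} (θ : Fin n → ℝ) :
    (Matrix.vandermonde fun j => exp (I * θ j)).det =
      ∑ σ : Equiv.Perm (Fin n), (Equiv.Perm.sign σ : ℂ) * torusChar (fun j => (σ⁻¹ j : ℕ)) θ := by
  rw [Matrix.det_apply']
  refine sum_congr rfl fun σ _ => ?_
  conv_rhs => rw [torusChar, ← Equiv.prod_comp σ]
  simp only [Matrix.vandermonde_apply, ← exp_nat_mul, Equiv.Perm.inv_def, Equiv.symm_apply_apply]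
  push_cast
  exact congrArg _ (prod_congr rfl fun i _ => by ring_nf)

lemma injective_inv_val_perm (n : ℕ) :
    Function.Injective fun (σ : Equiv.Perm (Fin n)) (j : Fin n) => ((σ⁻¹ j : ℕ) : ℤ) := by
  intro σ τ h
  refine inv_injective (Equiv.ext fun j => Fin.ext ?_)
  simpa using congrFun h j

/-- The normalization of the joint eigenvalue density of the circular unitary ensemble:
`∫_{[0,2π]^n} ∏_{1≤i<j≤n} |e^{iθ_i} - e^{iθ_j}|² dθ = (2π)^n n!`. -/
theorem stmt_12 (n : ℕ) :
    ∫ θ in Set.univ.pi fun _ : Fin n => Set.Icc (0 : ℝ) (2 * Real.pi),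
      ∏ p ∈ Finset.univ.filter fun p : Fin n × Fin n => p.1 < p.2,
        ‖Complex.exp (Complex.I * (θ p.1 : ℂ)) -
          Complex.exp (Complex.I * (θ p.2 : ℂ))‖ ^ 2
    = (2 * Real.pi) ^ n * (Nat.factorial n : ℝ) := by
  calc _ = ∫ θ in Set.univ.pi fun _ : Fin n => Set.Icc (0 : ℝ) (2 * Real.pi),
          ‖∑ σ : Equiv.Perm (Fin n),
            (Equiv.Perm.sign σ : ℂ) * torusChar (fun j => (σ⁻¹ j : ℕ)) θ‖ ^ 2 := by
        congr 1
        funext θ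
        rw [← det_vandermonde_exp_mul_I, norm_det_vandermonde_sq]
    _ = (2 * Real.pi) ^ n * ∑ σ : Equiv.Perm (Fin n), ‖(Equiv.Perm.sign σ : ℂ)‖ ^ 2 := by
        rw [setIntegral_norm_sum_torusChar_sq _ (injective_inv_val_perm n), Fintype.card_fin]
    _ = _ := by simp [← Int.cast_abs, Fintype.card_perm]
end

section
/- Andréief's identity: for integrable functions M_1,...,M_n and N_1,...,N_n on [a,b] with weight w, the n-fold integral over the ordered simplex b ≥ x₁ ≥ ⋯ ≥ x_n ≥ a of det(M_i(x_j)) · det(N_i(x_j)) · ∏_j w(x_j) dx_j equals det(∫_a^b M_i(t) N_j(t) w(t) dt). -/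
/-!
Absorb the interval and the weight into the measure `μ = volume.restrict [a,b]` and the functions
`g_j = N_j w`. Expanding the determinant and using Fubini, `det (∫ f_i g_j dμ)` is the integral over
`ℝⁿ` of `det (f_i(x_j) g_j(x_j))`. Almost every point of `ℝⁿ` has distinct coordinates, so exactly
one permutation `τ` sorts it decreasingly; cutting `ℝⁿ` into these sectors and pulling each back to
the ordered one by the measure-preserving map `x ↦ x ∘ τ` turns the integral into one over the
ordered sector of `∑_τ det (f_i(x_{τ j}) g_j(x_{τ j}))`. Writing that matrix as the column
permutation of `(f_i(x_j))` times a diagonal matrix shows the sum is `det (f_i(x_j)) det (g_i(x_j))`.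
-/

open MeasureTheory Matrix

namespace Matrix

variable {ι : Type*} [Fintype ι] [DecidableEq ι]

theorem sum_perm_det_mul_eq_det_mul_det {α R : Type*} [CommRing R] (f g : ι → α → R)
    (x : ι → α) :
    ∑ τ : Equiv.Perm ι, (of fun i j => f i (x (τ j)) * g j (x (τ j))).det =
      (of fun i j => f i (x j)).det * (of fun i j => g i (x j)).det := by
  have hfactor (τ : Equiv.Perm ι) : (of fun i j => f i (x (τ j)) * g j (x (τ j))) =
      (of fun i j => f i (x j)).submatrix id τ * diagonal fun j => g j (x (τ j)) := by
    ext i j; simp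
  rw [← det_transpose (of fun i j => g i (x j)), det_apply' (of fun i j => g i (x j))ᵀ,
    Finset.mul_sum]
  simp only [hfactor, det_mul, det_permute', det_diagonal, transpose_apply, of_apply]
  exact Finset.sum_congr rfl fun τ _ => by ring

variable {α 𝕜 : Type*} [MeasurableSpace α] [RCLike 𝕜] {μ : Measure α} [SigmaFinite μ]
  {f : ι → ι → α → 𝕜}

theorem integrable_det_of_integrable (hf : ∀ i j, Integrable (f i j) μ) :
    Integrable (fun x : ι → α => (of fun i j => f i j (x j)).det) (Measure.pi fun _ => μ) := by
  simp only [det_apply', of_apply]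
  exact integrable_finsetSum _ fun σ _ =>
    (Integrable.fintype_prod fun j => hf (σ j) j).const_mul _

theorem det_integral_eq_integral_det (hf : ∀ i j, Integrable (f i j) μ) :
    (of fun i j => ∫ t, f i j t ∂μ).det =
      ∫ x, (of fun i j => f i j (x j)).det ∂(Measure.pi fun _ => μ) := by
  simp only [det_apply', of_apply]
  rw [integral_finsetSum _ fun σ _ =>
    (Integrable.fintype_prod fun j => hf (σ j) j).const_mul _]
  simp only [integral_const_mul, integral_fintype_prod_eq_prod]

end Matrix

theorem Tuple.existsUnique_antitone_comp_perm {n : ℕ} {α : Type*} [LinearOrder α]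
    {x : Fin n → α} (hx : x.Injective) : ∃! τ : Equiv.Perm (Fin n), Antitone (x ∘ τ) := by
  have hsort (σ : Equiv.Perm (Fin n)) : Monotone (x ∘ σ) ↔ σ = Tuple.sort x :=
    ⟨fun h => Tuple.eq_sort_iff.2 ⟨h, fun i j hij hxij => absurd (σ.injective (hx hxij)) hij.ne⟩,
      fun h => h ▸ Tuple.monotone_sort x⟩
  refine ⟨Tuple.sort x * Fin.revPerm, fun i j hij => ?_, fun τ hτ => ?_⟩
  · simpa using Tuple.monotone_sort x (Fin.rev_le_rev.2 hij)
  have hmono : Monotone (x ∘ ⇑(τ * Fin.revPerm : Equiv.Perm (Fin n))) := fun i j hij => by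
    simpa using hτ (Fin.rev_le_rev.2 hij)
  rw [← (hsort _).1 hmono, mul_assoc]
  ext; simp

namespace MeasureTheory

variable {μ : Measure ℝ} [SigmaFinite μ] [NullSingletonClass μ] {n : ℕ}

theorem Measure.pi_setOf_eval_eq_eval_null {i j : Fin n} (hij : i ≠ j) :
    Measure.pi (fun _ => μ) {x | x i = x j} = 0 := by
  obtain ⟨m, rfl⟩ : ∃ m, n = m + 1 := Nat.exists_eq_add_one_of_ne_zero (Fin.pos i).ne'
  obtain ⟨j, rfl⟩ := Fin.exists_succAbove_eq hij.symm
  have hmeas : MeasurableSet {p : ℝ × (Fin m → ℝ) | p.1 = p.2 j} :=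
    measurableSet_eq_fun measurable_fst ((measurable_pi_apply j).comp measurable_snd)
  rw [show {x : Fin (m + 1) → ℝ | x i = x (i.succAbove j)} =
      MeasurableEquiv.piFinSuccAbove (fun _ => ℝ) i ⁻¹' {p | p.1 = p.2 j} from rfl,
    (measurePreserving_piFinSuccAbove (fun _ => μ) i).measure_preimage hmeas.nullMeasurableSet,
    Measure.measure_prod_null hmeas]
  refine Filter.Eventually.of_forall fun y => ?_
  simpa [eq_comm] using Measure.pi_hyperplane (fun _ => μ) j y

theorem Measure.ae_pi_injective : ∀ᵐ x ∂Measure.pi (fun _ : Fin n => μ), x.Injective := by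
  simp only [Function.Injective, ae_all_iff]
  intro i j
  by_cases hij : i = j
  · exact Filter.Eventually.of_forall fun _ _ => hij
  · exact measure_mono_null (fun x hx => by simpa [hij] using hx)
      (Measure.pi_setOf_eval_eq_eval_null hij)

theorem integral_eq_setIntegral_antitone_sum_comp_perm {E : Type*} [NormedAddCommGroup E]
    [NormedSpace ℝ E] {D : (Fin n → ℝ) → E} (hD : Integrable D (Measure.pi fun _ => μ)) :
    ∫ x, D x ∂Measure.pi (fun _ => μ) =
      ∫ x in {x | Antitone x}, ∑ τ : Equiv.Perm (Fin n), D (x ∘ τ) ∂Measure.pi (fun _ => μ) := by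
  set S := {x : Fin n → ℝ | Antitone x}
  have hS : MeasurableSet S := isClosed_antitone.measurableSet
  let e (τ : Equiv.Perm (Fin n)) := MeasurableEquiv.piCongrLeft (fun _ => ℝ) τ
  have he (τ) (x : Fin n → ℝ) : e τ x = x ∘ τ.symm := by
    ext a; simp [e, MeasurableEquiv.coe_piCongrLeft, Equiv.piCongrLeft_apply]
  have hmp (τ) : MeasurePreserving (e τ) (Measure.pi fun _ => μ) (Measure.pi fun _ => μ) :=
    measurePreserving_piCongrLeft (fun _ => μ) τ
  have hcover : ∀ᵐ x ∂Measure.pi (fun _ => μ), ∑ τ, (e τ ⁻¹' S).indicator D x = D x := by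
    filter_upwards [Measure.ae_pi_injective] with x hx
    obtain ⟨τ, hτ, huniq⟩ := Tuple.existsUnique_antitone_comp_perm hx
    have hmem (σ : Equiv.Perm (Fin n)) : x ∈ e σ ⁻¹' S ↔ σ.symm = τ := by
      rw [Set.mem_preimage, he]
      exact ⟨huniq _, fun h => h ▸ hτ⟩
    rw [Finset.sum_eq_single τ.symm (fun σ _ hσ => Set.indicator_of_notMem
        (fun h => hσ (by rw [← (hmem σ).1 h, Equiv.symm_symm])) D) (by simp),
      Set.indicator_of_mem ((hmem _).2 (Equiv.symm_symm τ))]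
  calc ∫ x, D x ∂Measure.pi (fun _ => μ)
      = ∑ τ : Equiv.Perm (Fin n), ∫ x in e τ ⁻¹' S, D x ∂Measure.pi (fun _ => μ) := by
        rw [← integral_congr_ae hcover, integral_finsetSum _ fun τ _ =>
          hD.indicator (hS.preimage (e τ).measurable)]
        simp only [integral_indicator (hS.preimage (e _).measurable)]
    _ = ∑ τ : Equiv.Perm (Fin n), ∫ x in S, D (x ∘ ⇑τ) ∂Measure.pi (fun _ => μ) := by
        refine Finset.sum_congr rfl fun τ _ => ?_
        rw [← (hmp τ).setIntegral_preimage_emb (e τ).measurableEmbedding (fun y => D (y ∘ τ)) S]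
        simp [he, Function.comp_assoc]
    _ = _ := by
        refine (integral_finsetSum _ fun τ _ => Integrable.integrableOn ?_).symm
        have := ((hmp τ.symm).integrable_comp_emb (e τ.symm).measurableEmbedding).2 hD
        simpa [Function.comp_def, he] using this

theorem setIntegral_antitone_det_mul_det (f g : Fin n → ℝ → ℝ)
    (h : ∀ i j, Integrable (fun t => f i t * g j t) μ) :
    ∫ x in {x | Antitone x}, (of fun i j => f i (x j)).det * (of fun i j => g i (x j)).det
      ∂Measure.pi (fun _ => μ) = (of fun i j => ∫ t, f i t * g j t ∂μ).det := by
  rw [det_integral_eq_integral_det h,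
    integral_eq_setIntegral_antitone_sum_comp_perm (integrable_det_of_integrable h)]
  simp only [Function.comp_apply, sum_perm_det_mul_eq_det_mul_det]

end MeasureTheory

/-- Andréief's identity: for functions `M_1, …, M_n`, `N_1, …, N_n` and a weight `w` on
`[a,b]` such that every `t ↦ M_i(t) N_j(t) w(t)` is integrable on `[a,b]`, the `n`-fold
integral over the ordered simplex `b ≥ x₁ ≥ ⋯ ≥ x_n ≥ a` of
`det(M_i(x_j)) · det(N_i(x_j)) · ∏_j w(x_j)` equals `det(∫_a^b M_i(t) N_j(t) w(t) dt)`. -/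
theorem stmt_13 (n : ℕ) (a b : ℝ) (M N : Fin n → ℝ → ℝ) (w : ℝ → ℝ)
    (hInt : ∀ i j : Fin n, IntegrableOn (fun t => M i t * N j t * w t) (Set.Icc a b)) :
    ∫ x in {x : Fin n → ℝ |
        (∀ i, x i ∈ Set.Icc a b) ∧ ∀ i j : Fin n, i ≤ j → x j ≤ x i},
      (Matrix.of fun i j : Fin n => M i (x j)).det *
        (Matrix.of fun i j : Fin n => N i (x j)).det * ∏ j, w (x j)
    = (Matrix.of fun i j : Fin n => ∫ t in Set.Icc a b, M i t * N j t * w t).det := by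
  have hset : {x : Fin n → ℝ | (∀ i, x i ∈ Set.Icc a b) ∧ ∀ i j : Fin n, i ≤ j → x j ≤ x i} =
      {x | Antitone x} ∩ Set.univ.pi fun _ => Set.Icc a b := by
    ext x
    simp only [Set.mem_ofPred_eq, Set.mem_inter_iff, Set.mem_univ_pi]
    exact and_comm
  have hweight (x : Fin n → ℝ) : (of fun i j => N i (x j)).det * ∏ j, w (x j) =
      (of fun i j => N i (x j) * w (x j)).det := by
    rw [mul_comm, ← det_mul_row]
    simp only [mul_comm (w _), of_apply]
  simp only [mul_assoc, hweight] at hInt ⊢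
  rw [hset, ← Measure.restrict_restrict isClosed_antitone.measurableSet, volume_pi,
    Measure.restrict_pi_pi]
  exact setIntegral_antitone_det_mul_det M (fun j t => N j t * w t) hInt
end

section
/- Wendel's inequality: for all real x > 0 and a ∈ [0,1], x·(x+a)^{a-1} ≤ Γ(x+a)/Γ(x) ≤ x^a; consequently lim_{x→∞} Γ(x+α)/(Γ(x) x^α) = 1 for every fixed real α ≥ 0. -/
/-!
Since `log ∘ Γ` is convex on `(0, ∞)` and `Γ (x + 1) = x Γ x`, interpolating between `x` and
`x + 1` gives `Γ (x + a) ≤ Γ x · x ^ a`; the same bound at `x + a` with exponent `1 - a` is the lower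
bound. The two bounds squeeze `Γ (x + a) / (Γ x · x ^ a)` to `1` for `a ∈ [0, 1]`, and each
shift `α ↦ α + 1` multiplies this ratio by `(x + α) / x → 1`.
-/

open Real Filter Topology Set

section Wendel

variable {x a : ℝ}

theorem log_Gamma_add_le (hx : 0 < x) (ha₀ : 0 ≤ a) (ha₁ : a ≤ 1) :
    log (Gamma (x + a)) ≤ log (Gamma x) + a * log x := by
  have hconv := convexOn_log_Gamma.2 (mem_Ioi.2 hx) (mem_Ioi.2 (by linarith : 0 < x + 1))
    (sub_nonneg.2 ha₁) ha₀ (sub_add_cancel 1 a)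
  calc log (Gamma (x + a)) = log (Gamma ((1 - a) • x + a • (x + 1))) := by
        simp only [smul_eq_mul]; ring_nf
    _ ≤ (1 - a) • log (Gamma x) + a • log (Gamma (x + 1)) := hconv
    _ = log (Gamma x) + a * log x := by
        rw [Gamma_add_one hx.ne', log_mul hx.ne' (Gamma_pos_of_pos hx).ne', smul_eq_mul,
          smul_eq_mul]
        ring

theorem Gamma_add_le_Gamma_mul_rpow (hx : 0 < x) (ha₀ : 0 ≤ a) (ha₁ : a ≤ 1) :
    Gamma (x + a) ≤ Gamma x * x ^ a := by
  have hΓ := Gamma_pos_of_pos hx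
  rw [← log_le_log_iff (Gamma_pos_of_pos (by linarith)) (by positivity),
    log_mul hΓ.ne' (rpow_pos_of_pos hx a).ne', log_rpow hx]
  exact log_Gamma_add_le hx ha₀ ha₁

theorem Gamma_add_div_Gamma_le_rpow (hx : 0 < x) (ha₀ : 0 ≤ a) (ha₁ : a ≤ 1) :
    Gamma (x + a) / Gamma x ≤ x ^ a := by
  rw [div_le_iff₀' (Gamma_pos_of_pos hx)]
  exact Gamma_add_le_Gamma_mul_rpow hx ha₀ ha₁

theorem mul_rpow_le_Gamma_add_div_Gamma (hx : 0 < x) (ha₀ : 0 ≤ a) (ha₁ : a ≤ 1) :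
    x * (x + a) ^ (a - 1) ≤ Gamma (x + a) / Gamma x := by
  have hxa : 0 < x + a := by linarith
  have h := Gamma_add_le_Gamma_mul_rpow hxa (sub_nonneg.2 ha₁) (sub_le_self 1 ha₀)
  rw [add_add_sub_cancel, Gamma_add_one hx.ne'] at h
  rw [le_div_iff₀ (Gamma_pos_of_pos hx)]
  calc x * (x + a) ^ (a - 1) * Gamma x = x * Gamma x * (x + a) ^ (a - 1) := by ring
    _ ≤ Gamma (x + a) * (x + a) ^ (1 - a) * (x + a) ^ (a - 1) := by gcongr
    _ = Gamma (x + a) := by rw [mul_assoc, ← rpow_add hxa]; norm_num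

end Wendel

theorem tendsto_add_div_self_atTop (c : ℝ) :
    Tendsto (fun x : ℝ => (x + c) / x) atTop (𝓝 1) := by
  have h : Tendsto (fun x : ℝ => 1 + c * x⁻¹) atTop (𝓝 (1 + c * 0)) :=
    tendsto_const_nhds.add (tendsto_const_nhds.mul tendsto_inv_atTop_zero)
  rw [mul_zero, add_zero] at h
  refine h.congr' ?_
  filter_upwards [eventually_gt_atTop 0] with x hx
  field_simp

theorem tendsto_Gamma_add_div_Gamma_mul_rpow_of_le_one {b : ℝ} (hb₀ : 0 ≤ b) (hb₁ : b ≤ 1) :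
    Tendsto (fun x : ℝ => Gamma (x + b) / (Gamma x * x ^ b)) atTop (𝓝 1) := by
  have hlower : Tendsto (fun x : ℝ => ((x + b) / x) ^ (b - 1)) atTop (𝓝 1) := by
    simpa using (tendsto_add_div_self_atTop b).rpow_const (Or.inl one_ne_zero)
  refine tendsto_of_tendsto_of_tendsto_of_le_of_le' hlower tendsto_const_nhds ?_ ?_
  all_goals
    filter_upwards [eventually_gt_atTop 0] with x hx
    rw [div_mul_eq_div_div]
  · calc ((x + b) / x) ^ (b - 1) = x * (x + b) ^ (b - 1) / x ^ b := by
          rw [div_rpow (by linarith) hx.le, rpow_sub_one hx.ne']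
          field_simp
      _ ≤ Gamma (x + b) / Gamma x / x ^ b := by
          gcongr
          exact mul_rpow_le_Gamma_add_div_Gamma hx hb₀ hb₁
  · rw [div_le_one (rpow_pos_of_pos hx b)]
    exact Gamma_add_div_Gamma_le_rpow hx hb₀ hb₁

theorem Gamma_add_add_one_div_Gamma_mul_rpow {x α : ℝ} (hx : 0 < x) (hα : 0 ≤ α) :
    Gamma (x + (α + 1)) / (Gamma x * x ^ (α + 1)) =
      Gamma (x + α) / (Gamma x * x ^ α) * ((x + α) / x) := by
  have hΓ := Gamma_pos_of_pos hx
  have hxα : 0 < x ^ α := rpow_pos_of_pos hx α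
  rw [← add_assoc, Gamma_add_one (by linarith), rpow_add_one hx.ne']
  field_simp

theorem tendsto_Gamma_add_div_Gamma_mul_rpow_add_one {α : ℝ} (hα : 0 ≤ α)
    (h : Tendsto (fun x : ℝ => Gamma (x + α) / (Gamma x * x ^ α)) atTop (𝓝 1)) :
    Tendsto (fun x : ℝ => Gamma (x + (α + 1)) / (Gamma x * x ^ (α + 1))) atTop (𝓝 1) := by
  have hprod := h.mul (tendsto_add_div_self_atTop α)
  rw [mul_one] at hprod
  refine hprod.congr' ?_
  filter_upwards [eventually_gt_atTop 0] with x hx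
  exact (Gamma_add_add_one_div_Gamma_mul_rpow hx hα).symm

theorem tendsto_Gamma_add_div_Gamma_mul_rpow {α : ℝ} (hα : 0 ≤ α) :
    Tendsto (fun x : ℝ => Gamma (x + α) / (Gamma x * x ^ α)) atTop (𝓝 1) := by
  obtain ⟨b, n, hb₀, hb₁, rfl⟩ : ∃ (b : ℝ) (n : ℕ), 0 ≤ b ∧ b ≤ 1 ∧ α = b + n :=
    ⟨α - ⌊α⌋₊, ⌊α⌋₊, sub_nonneg.2 (Nat.floor_le hα),
      by linarith [Nat.lt_floor_add_one α], by ring⟩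
  induction n with
  | zero => simpa using tendsto_Gamma_add_div_Gamma_mul_rpow_of_le_one hb₀ hb₁
  | succ n ih =>
    rw [Nat.cast_succ, ← add_assoc]
    exact tendsto_Gamma_add_div_Gamma_mul_rpow_add_one (by positivity) (ih (by positivity))

/-- Wendel's inequality: for all real `x > 0` and `a ∈ [0,1]`,
`x (x+a)^{a-1} ≤ Γ(x+a)/Γ(x) ≤ x^a`; consequently
`lim_{x→∞} Γ(x+α)/(Γ(x) x^α) = 1` for every fixed real `α ≥ 0`. -/
theorem stmt_18 :
    (∀ x : ℝ, 0 < x → ∀ a ∈ Set.Icc (0 : ℝ) 1,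
      x * (x + a) ^ (a - 1) ≤ Real.Gamma (x + a) / Real.Gamma x ∧
        Real.Gamma (x + a) / Real.Gamma x ≤ x ^ a) ∧
    ∀ α : ℝ, 0 ≤ α →
      Filter.Tendsto (fun x : ℝ => Real.Gamma (x + α) / (Real.Gamma x * x ^ α))
        Filter.atTop (nhds 1) :=
  ⟨fun _ hx _ ha => ⟨mul_rpow_le_Gamma_add_div_Gamma hx ha.1 ha.2,
    Gamma_add_div_Gamma_le_rpow hx ha.1 ha.2⟩,
   fun _ hα => tendsto_Gamma_add_div_Gamma_mul_rpow hα⟩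
end
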